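/- Assume n ≥ 3, the dual graph Γ of A is a generalized cycle (any two distinct vertices of Γ lie on a common cycle of Γ), and C(A)_i ≤ 0 for all i. Then A satisfies (NN) if and only if there exist at least two indices i with C(A)_i < 0. -/

import Mathlib

/-- `A` is negative definite: `xᵀAx < 0` for every nonzero real vector `x`. -/
def NegDefQ {V : Type*} [Fintype V] (A : Matrix V V ℚ) : Prop :=
  ∀ x : V → ℝ, x ≠ 0 → ∑ i, ∑ j, x i * (A i j : ℝ) * x j < 0

/-- Numerical Nash condition `NN_(i,j)`: for every rational vector `C` with nonpositive
entries there is an integer vector `X` with positive entries such that `(AX)_k ≤ C_k`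
for all `k` and `X i < X j`. -/
def NashNN {V : Type*} [Fintype V] (A : Matrix V V ℚ) (i j : V) : Prop :=
  ∀ C : V → ℚ, (∀ k, C k ≤ 0) →
    ∃ X : V → ℤ, (∀ k, 0 < X k) ∧ (∀ k, ∑ t, A k t * (X t : ℚ) ≤ C k) ∧ X i < X j

/-- Condition `(NN)`: `NN_(i,j)` for every ordered pair of distinct indices. -/
def NashNNAll {V : Type*} [Fintype V] (A : Matrix V V ℚ) : Prop :=
  ∀ i j : V, i ≠ j → NashNN A i j

/-- The dual graph of `A`: edge between distinct `i, j` iff `A i j > 0`. -/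
def dualGraph {V : Type*} (A : Matrix V V ℚ) : SimpleGraph V :=
  SimpleGraph.fromRel fun i j => 0 < A i j

/-- A leaf of a graph: a vertex adjacent to exactly one other vertex. -/
def IsLeaf {V : Type*} (G : SimpleGraph V) (i : V) : Prop :=
  ∃! j, G.Adj i j

/-!
Both directions are maximum principles for `A` on its dual graph `Γ`. At a maximum `s` of a vector
`u`, the sum `∑ₜ A s t (u t - u s) = (A u)_s - u s · C(A)_s` has only nonpositive terms, so when
it is `≥ 0` the maximum spreads to every neighbour of `s`.

Since `1ᵀA1 < 0`, some `C(A)_p < 0`. If it were the only one, every `X` with `A X ≤ 0` would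
spread its minimum along a walk to `p`, so `NN_(j,p)` would fail for `C = 0`.

Conversely, `-A` is an M-matrix, so `w = -A⁻¹ e_j ≥ 0`. A maximum of `w` at some `i ≠ j` would
spread over `Γ - j`, which is connected for a generalized cycle, and force `C(A)_k = 0` for every
`k ≠ j`. Hence `w i < w j`, and adding a large multiple of `w` to the positive solution of
`A y = C - 1`, then clearing denominators, gives `NN_(i,j)`.
-/

open SimpleGraph Matrix Finset

namespace SimpleGraph.Walk

variable {V : Type*} {G : SimpleGraph V}

lemma exists_walk_notMem_support_of_takeUntil [DecidableEq V] {a b i v j : V} (r : G.Walk a b)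
    (hi : i ∈ r.support) (hv : v ∈ r.support) (hji : j ∉ (r.takeUntil i hi).support)
    (hjv : j ∉ (r.takeUntil v hv).support) : ∃ p : G.Walk i v, j ∉ p.support :=
  ⟨(r.takeUntil i hi).reverse.append (r.takeUntil v hv), by
    simp [mem_support_append_iff, hji, hjv]⟩

lemma IsCycle.exists_walk_notMem_support {u i v j : V} {c : G.Walk u u} (hc : c.IsCycle)
    (hi : i ∈ c.support) (hv : v ∈ c.support) (hij : i ≠ j) (hvj : v ≠ j) :
    ∃ p : G.Walk i v, j ∉ p.support := by
  classical
  by_cases hj : j ∈ c.support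
  · -- rotated to start at `j`, the cycle is an edge followed by a path ending at `j`
    cases hd : c.rotate j hj with
    | nil => exact absurd (hd ▸ hc.rotate hj) not_isCycle_nil
    | cons h q =>
      have hq : q.IsPath := ((cons_isCycle_iff q h).1 (hd ▸ hc.rotate hj)).1
      have mem_q : ∀ {w}, w ∈ c.support → w ≠ j → w ∈ q.support := fun hw hwj => by
        have := (mem_support_rotate_iff c j hj).2 hw
        rw [hd, support_cons, List.mem_cons] at this
        exact this.resolve_left hwj
      exact exists_walk_notMem_support_of_takeUntil q (mem_q hi hij) (mem_q hv hvj)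
        (endpoint_notMem_support_takeUntil hq _ hij.symm)
        (endpoint_notMem_support_takeUntil hq _ hvj.symm)
  · exact exists_walk_notMem_support_of_takeUntil c hi hv
      (fun h => hj (c.support_takeUntil_subset_support hi h))
      (fun h => hj (c.support_takeUntil_subset_support hv h))

lemma propagate_end_or_barrier {P : V → Prop} {j : V}
    (hP : ∀ s t, P s → s ≠ j → G.Adj s t → P t) :
    ∀ {a b : V} (p : G.Walk a b), P a → P b ∨ (j ∈ p.support ∧ P j)
  | _, _, nil, ha => Or.inl ha
  | a, _, cons h q, ha => by
    by_cases haj : a = j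
    · exact Or.inr ⟨by simp [haj], haj ▸ ha⟩
    · rcases propagate_end_or_barrier hP q (hP _ _ ha haj h) with hb | ⟨hjq, hPj⟩
      · exact Or.inl hb
      · exact Or.inr ⟨by simp [hjq], hPj⟩

end SimpleGraph.Walk

namespace SimpleGraph

variable {V : Type*} (G : SimpleGraph V)

def IsGeneralizedCycle : Prop :=
  ∀ i j, i ≠ j → ∃ (v : V) (w : G.Walk v v), w.IsCycle ∧ i ∈ w.support ∧ j ∈ w.support

variable {G}

lemma IsGeneralizedCycle.preconnected (hG : G.IsGeneralizedCycle) : G.Preconnected :=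
  fun u v => by
    rcases eq_or_ne u v with rfl | huv
    · rfl
    · obtain ⟨_, c, hc, hu, hv⟩ := hG u v huv
      exact (hc.isTrail.isEdgeReachable_two hu hv).reachable two_ne_zero

lemma IsGeneralizedCycle.exists_walk_notMem_support (hG : G.IsGeneralizedCycle)
    {i v j : V} (hij : i ≠ j) (hvj : v ≠ j) : ∃ p : G.Walk i v, j ∉ p.support := by
  rcases eq_or_ne i v with rfl | hiv
  · exact ⟨Walk.nil, by simpa using hij.symm⟩
  · obtain ⟨_, c, hc, hi, hv⟩ := hG i v hiv
    exact hc.exists_walk_notMem_support hi hv hij hvj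

end SimpleGraph

section Matrix

variable {V : Type*} {A : Matrix V V ℚ}

lemma pos_of_dualGraph_adj (hsym : ∀ i j, A i j = A j i) {s t : V}
    (h : (dualGraph A).Adj s t) : 0 < A s t := by
  rcases h with ⟨-, h | h⟩
  exacts [h, hsym s t ▸ h]

lemma mul_sub_nonpos_of_forall_le (hoff : ∀ i j, i ≠ j → 0 ≤ A i j) {x : V → ℚ} {s : V}
    (hmax : ∀ t, x t ≤ x s) (t : V) : A s t * (x t - x s) ≤ 0 := by
  rcases eq_or_ne s t with rfl | hst
  · simp
  · exact mul_nonpos_of_nonneg_of_nonpos (hoff s t hst) (sub_nonpos.2 (hmax t))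

variable [Fintype V]

lemma NegDefQ.dotProduct_mulVec_neg (hA : NegDefQ A) {x : V → ℚ} (hx : x ≠ 0) :
    x ⬝ᵥ A *ᵥ x < 0 := by
  have hx' : (fun i => (x i : ℝ)) ≠ 0 := fun h => hx (funext fun i => by
    simpa using congrFun h i)
  have : ((x ⬝ᵥ A *ᵥ x : ℚ) : ℝ) < 0 := by
    simpa [dotProduct, mulVec, Finset.mul_sum, mul_assoc] using hA _ hx'
  exact_mod_cast this

lemma NegDefQ.exists_sum_neg [Nonempty V] (hA : NegDefQ A) : ∃ p, ∑ t, A p t < 0 := by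
  have h := hA.dotProduct_mulVec_neg (x := 1) one_ne_zero
  simp only [dotProduct, mulVec, Pi.one_apply, one_mul, mul_one] at h
  obtain ⟨p, -, hp⟩ := Finset.exists_lt_of_sum_lt (g := fun _ => (0 : ℚ)) (by simpa using h)
  exact ⟨p, hp⟩

lemma NegDefQ.exists_mulVec_eq (hA : NegDefQ A) (b : V → ℚ) : ∃ y, A *ᵥ y = b := by
  classical
  have hinj : Function.Injective A.mulVec := fun x y h => by
    by_contra hxy
    have := hA.dotProduct_mulVec_neg (sub_ne_zero.2 hxy)
    rw [mulVec_sub, h, sub_self, dotProduct_zero] at this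
    exact lt_irrefl _ this
  exact mulVec_surjective_iff_isUnit.2 (mulVec_injective_iff_isUnit.1 hinj) b

variable (hoff : ∀ i j, i ≠ j → 0 ≤ A i j)
include hoff

lemma NegDefQ.nonneg_of_mulVec_nonpos (hA : NegDefQ A) {y : V → ℚ} (hy : A *ᵥ y ≤ 0) :
    0 ≤ y := by
  intro k
  by_contra! hk : y k < 0
  -- pair with the negative part `z` of `y`: `zᵀA(y + z) ≥ 0` as `z_k (y + z)_k = 0`, while
  -- `zᵀAy ≤ 0` and `zᵀAz < 0`
  set z : V → ℚ := fun k => max (-y k) 0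
  have hz : z ≠ 0 := fun h => by
    have := congrFun h k
    simp only [z, Pi.zero_apply, max_eq_right_iff] at this
    linarith
  have hzy : 0 ≤ z ⬝ᵥ A *ᵥ (y + z) := by
    refine Finset.sum_nonneg fun s _ => ?_
    rw [mulVec, dotProduct, Finset.mul_sum]
    refine Finset.sum_nonneg fun t _ => ?_
    rcases eq_or_ne s t with rfl | hst
    · rcases le_total (y s) 0 with h | h <;> simp [z, h]
    · exact mul_nonneg (le_max_right _ _)
        (mul_nonneg (hoff s t hst) (by simp only [Pi.add_apply, z]; grind))
  have hzb : z ⬝ᵥ A *ᵥ y ≤ 0 :=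
    Finset.sum_nonpos fun s _ => mul_nonpos_of_nonneg_of_nonpos (le_max_right _ _) (hy s)
  have := hA.dotProduct_mulVec_neg hz
  rw [mulVec_add, dotProduct_add] at hzy
  linarith

lemma pos_of_mulVec_neg {y : V → ℚ} (hy : 0 ≤ y) {k : V} (hk : (A *ᵥ y) k < 0) :
    0 < y k := by
  refine (hy k).lt_of_ne fun h => hk.not_ge (Finset.sum_nonneg fun t _ => ?_)
  rcases eq_or_ne k t with rfl | hkt
  · simp [← h]
  · exact mul_nonneg (hoff k t hkt) (hy t)

omit hoff in
lemma sum_mul_sub_eq (x : V → ℚ) (s : V) :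
    ∑ t, A s t * (x t - x s) = (A *ᵥ x) s - x s * ∑ t, A s t := by
  simp only [mulVec, dotProduct, mul_sub, Finset.sum_sub_distrib, Finset.mul_sum, mul_comm]

lemma eq_of_le_of_sum_mul_sub_nonneg {x : V → ℚ} {s : V} (hmax : ∀ t, x t ≤ x s)
    (hsum : 0 ≤ ∑ t, A s t * (x t - x s)) {t : V} (hst : 0 < A s t) : x t = x s := by
  have hterms := fun t (_ : t ∈ univ) => mul_sub_nonpos_of_forall_le hoff hmax t
  have hzero := (Finset.sum_eq_zero_iff_of_nonpos hterms).1
    (le_antisymm (Finset.sum_nonpos hterms) hsum) t (mem_univ t)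
  linarith [(mul_eq_zero.1 hzero).resolve_left hst.ne']

lemma sum_eq_zero_and_eq_of_le {x : V → ℚ} {s : V} (hmax : ∀ t, x t ≤ x s) (hpos : 0 < x s)
    (hrow : ∑ t, A s t ≤ 0) (hs : (A *ᵥ x) s = 0) :
    ∑ t, A s t = 0 ∧ ∀ t, 0 < A s t → x t = x s := by
  have hsum := sum_mul_sub_eq (A := A) x s
  have hle : ∑ t, A s t * (x t - x s) ≤ 0 :=
    Finset.sum_nonpos fun t _ => mul_sub_nonpos_of_forall_le hoff hmax t
  rw [hs, zero_sub] at hsum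
  refine ⟨le_antisymm hrow ?_, fun t => eq_of_le_of_sum_mul_sub_nonneg hoff hmax ?_⟩
  · nlinarith
  · nlinarith

theorem not_nashNN_of_sum_eq_zero (hsym : ∀ i j, A i j = A j i)
    (hconn : (dualGraph A).Preconnected) {p : V} (hzero : ∀ k, k ≠ p → ∑ t, A k t = 0)
    (j : V) : ¬ NashNN A j p := by
  intro hNN
  obtain ⟨X, -, hAX, hlt⟩ := hNN 0 fun _ => le_rfl
  set x : V → ℚ := fun k => -(X k : ℚ)
  obtain ⟨m, -, hm⟩ := Finset.exists_max_image univ x ⟨p, mem_univ p⟩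
  have hspread : ∀ s t, x s = x m → s ≠ p → (dualGraph A).Adj s t → x t = x m := by
    intro s t hs hsp hadj
    have hmax : ∀ t, x t ≤ x s := hs ▸ fun t => hm t (mem_univ t)
    rw [← hs]
    refine eq_of_le_of_sum_mul_sub_nonneg hoff hmax ?_ (pos_of_dualGraph_adj hsym hadj)
    have hAx : (A *ᵥ x) s = -∑ t, A s t * X t := by
      simp [x, mulVec, dotProduct]
    rw [sum_mul_sub_eq, hzero s hsp, hAx]
    linarith [hAX s, show (0 : V → ℚ) s = 0 from rfl]
  obtain ⟨w⟩ := hconn m p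
  have hp : x p = x m := (w.propagate_end_or_barrier hspread rfl).elim id And.right
  have hj := hm j (mem_univ j)
  simp only [x] at hp hj
  exact hlt.not_ge (by exact_mod_cast (show (X p : ℚ) ≤ X j by linarith))

theorem lt_of_mulVec_eq_neg_single [DecidableEq V] (hsym : ∀ i j, A i j = A j i)
    (hA : NegDefQ A) (hrow : ∀ k, ∑ t, A k t ≤ 0) (hG : (dualGraph A).IsGeneralizedCycle)
    (hpq : ∃ p q : V, p ≠ q ∧ ∑ t, A p t < 0 ∧ ∑ t, A q t < 0) {j : V} {w : V → ℚ}
    (hw : A *ᵥ w = -Pi.single j 1) {i : V} (hij : i ≠ j) : w i < w j := by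
  have hAw : ∀ k, k ≠ j → (A *ᵥ w) k = 0 := fun k hk => by simp [hw, hk]
  have hnonneg := hA.nonneg_of_mulVec_nonpos hoff
    (hw ▸ neg_nonpos.2 (Pi.single_nonneg.2 zero_le_one))
  have hwj : 0 < w j := pos_of_mulVec_neg hoff hnonneg (by simp [hw])
  obtain ⟨m, -, hm⟩ := Finset.exists_max_image univ w ⟨j, mem_univ j⟩
  have hmax : ∀ s, w s = w m → s ≠ j → ∑ t, A s t = 0 ∧ ∀ t, 0 < A s t → w t = w s :=
    fun s hs hsj => sum_eq_zero_and_eq_of_le hoff (hs ▸ fun t => hm t (mem_univ t))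
      (hs ▸ hwj.trans_le (hm j (mem_univ j))) (hrow s) (hAw s hsj)
  by_contra hge
  obtain ⟨i₀, hi₀j, hi₀⟩ : ∃ i₀, i₀ ≠ j ∧ w i₀ = w m := by
    rcases eq_or_ne m j with rfl | hmj
    · exact ⟨i, hij, le_antisymm (hm i (mem_univ i)) (not_lt.1 hge)⟩
    · exact ⟨m, hmj, rfl⟩
  have hall : ∀ v, v ≠ j → w v = w m := fun v hvj => by
    obtain ⟨p, hp⟩ := hG.exists_walk_notMem_support hi₀j hvj
    have hspread : ∀ s t, w s = w m → s ≠ j → (dualGraph A).Adj s t → w t = w m :=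
      fun s t hs hsj hadj => ((hmax s hs hsj).2 t (pos_of_dualGraph_adj hsym hadj)).trans hs
    exact (p.propagate_end_or_barrier hspread hi₀).resolve_right fun h => hp h.1
  obtain ⟨p, q, hpq, hp, hq⟩ := hpq
  obtain ⟨k, hkj, hk⟩ : ∃ k, k ≠ j ∧ ∑ t, A k t < 0 := by
    rcases eq_or_ne p j with rfl | hpj
    exacts [⟨q, hpq.symm, hq⟩, ⟨p, hpj, hp⟩]
  exact hk.ne (hmax k (hall k hkj) hkj).1

omit hoff in
lemma exists_nat_mul_eq_int (z : V → ℚ) :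
    ∃ d : ℕ, 0 < d ∧ ∃ X : V → ℤ, ∀ k, (X k : ℚ) = d * z k := by
  refine ⟨∏ k, (z k).den, Finset.prod_pos fun k _ => (z k).pos,
    fun k => (z k).num * ((∏ t, (z t).den) / (z k).den : ℕ), fun k => ?_⟩
  have hdvd : (z k).den ∣ ∏ t, (z t).den := Finset.dvd_prod_of_mem _ (mem_univ k)
  have hd : ((∏ t, (z t).den : ℕ) : ℚ) = ((∏ t, (z t).den) / (z k).den : ℕ) * (z k).den := by
    exact_mod_cast (Nat.div_mul_cancel hdvd).symm
  rw [hd, mul_assoc, mul_comm ((z k).den : ℚ), Rat.mul_den_eq_num, Int.cast_mul,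
    Int.cast_natCast, mul_comm]

theorem NegDefQ.nashNN_of_mulVec_nonpos (hA : NegDefQ A) {w : V → ℚ}
    (hw : A *ᵥ w ≤ 0) {i j : V} (hij : w i < w j) : NashNN A i j := by
  classical
  intro C hC
  obtain ⟨y, hy⟩ := hA.exists_mulVec_eq (C - 1)
  have hAy : ∀ k, (A *ᵥ y) k < 0 := fun k => by simp [hy]; linarith [hC k]
  have hy0 : ∀ k, 0 < y k := fun k =>
    pos_of_mulVec_neg hoff (hA.nonneg_of_mulVec_nonpos hoff fun k => (hAy k).le) (hAy k)
  have hw0 := hA.nonneg_of_mulVec_nonpos hoff hw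
  obtain ⟨c, hc, hcy⟩ := exists_pos_lt_mul (sub_pos.2 hij) (y i - y j)
  obtain ⟨d, hd, X, hX⟩ := exists_nat_mul_eq_int (y + c • w)
  have hd1 : (1 : ℚ) ≤ d := by exact_mod_cast hd
  have hAX : ∀ k, ∑ t, A k t * (X t : ℚ) = d * ((C k - 1) + c * (A *ᵥ w) k) := fun k => by
    have : (fun t => (X t : ℚ)) = (d : ℚ) • (y + c • w) := funext fun t => by simp [hX]
    change (A *ᵥ fun t => (X t : ℚ)) k = _
    rw [this, mulVec_smul, mulVec_add, mulVec_smul, hy]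
    simp
  refine ⟨X, fun k => ?_, fun k => ?_, ?_⟩
  · have hz : 0 < y k + c * w k := by nlinarith [hy0 k, show 0 ≤ w k from hw0 k]
    have : (0 : ℚ) < X k := by
      rw [hX]
      exact mul_pos (by positivity) hz
    exact_mod_cast this
  · rw [hAX]
    nlinarith [hC k, hw k, mul_nonpos_of_nonneg_of_nonpos hc.le (hw k)]
  · have : (X i : ℚ) < X j := by
      rw [hX, hX]
      simp only [Pi.add_apply, Pi.smul_apply, smul_eq_mul]
      nlinarith
    exact_mod_cast this

end Matrix

theorem generalized_cycle_NN_iff_general (n : ℕ) (hn : 3 ≤ n) (A : Matrix (Fin n) (Fin n) ℚ)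
    (hsym : ∀ i j, A i j = A j i)
    (hoff : ∀ i j, i ≠ j → 0 ≤ A i j) (hneg : NegDefQ A)
    (hgen : ∀ i j : Fin n, i ≠ j → ∃ (v : Fin n) (w : (dualGraph A).Walk v v),
      w.IsCycle ∧ i ∈ w.support ∧ j ∈ w.support)
    (hC : ∀ i, ∑ j, A i j ≤ 0) :
    NashNNAll A ↔ ∃ i j : Fin n, i ≠ j ∧ ∑ t, A i t < 0 ∧ ∑ t, A j t < 0 := by
  have : Nonempty (Fin n) := ⟨⟨0, by omega⟩⟩
  constructor
  · intro hNN
    obtain ⟨p, hp⟩ := hneg.exists_sum_neg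
    by_contra hcon
    obtain ⟨j, hjp⟩ := Fintype.exists_ne_of_one_lt_card (by simp; omega) p
    have hzero : ∀ k, k ≠ p → ∑ t, A k t = 0 := fun k hk =>
      (hC k).antisymm (not_lt.1 fun h => hcon ⟨k, p, hk, h, hp⟩)
    exact not_nashNN_of_sum_eq_zero hoff hsym (IsGeneralizedCycle.preconnected hgen) hzero j
      (hNN j p hjp)
  · rintro hpq i j hij
    obtain ⟨w, hw⟩ := hneg.exists_mulVec_eq (-Pi.single j 1)
    have hw_nonpos : A *ᵥ w ≤ 0 := hw ▸ neg_nonpos.2 (Pi.single_nonneg.2 zero_le_one)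
    exact hneg.nashNN_of_mulVec_nonpos hoff hw_nonpos
      (lt_of_mulVec_eq_neg_single hoff hsym hneg hC hgen hpq hw hij)

theorem generalized_cycle_NN_iff (n : ℕ) (hn : 3 ≤ n) (A : Matrix (Fin n) (Fin n) ℚ)
    (hsym : ∀ i j, A i j = A j i) (hdiag : ∀ i, A i i < 0)
    (hoff : ∀ i j, i ≠ j → 0 ≤ A i j) (hneg : NegDefQ A)
    (hgen : ∀ i j : Fin n, i ≠ j → ∃ (v : Fin n) (w : (dualGraph A).Walk v v),
      w.IsCycle ∧ i ∈ w.support ∧ j ∈ w.support)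
    (hC : ∀ i, ∑ j, A i j ≤ 0) :
    NashNNAll A ↔ ∃ i j : Fin n, i ≠ j ∧ ∑ t, A i t < 0 ∧ ∑ t, A j t < 0 :=
  generalized_cycle_NN_iff_general n hn A hsym hoff hneg hgen hC
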